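/- arXiv:1309.3445 — 2 statements merged into one kernel-verified Lean document; each statement's English description precedes it below -/
import Mathlib

section
/- (Least Action Principle, Lemma 3.3) Let N be an abelian network with total alphabet A, and fix an initial state x.q with x ∈ ℤ^A, q ∈ Q. If the word w = w_1⋯w_r is a legal execution for x.q and the word w' = w'_1⋯w'_s is a complete execution for x.q, then |w| ≤ |w'| coordinatewise in ℕ^A, and in particular r ≤ s. -/
/-- The letter-count vector `|w| ∈ ℕ^A` of a word `w ∈ A^*`. -/
def lc {A : Type*} [DecidableEq A] (w : List A) : A → ℕ := fun a => w.count a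

/-- An abelian-network *data* structure on a directed graph with vertex set `V`, edge set `E`
(with source and target maps, allowing loops and multiple edges), total alphabet
`A = ⊔_v A_v` (the letter `a` belongs to the alphabet of the vertex `loc a`), and
state space `Q v` for the processor at vertex `v`.  The abelian hypothesis on the
processors is the separate predicate `AbelianNetwork.IsAbelian`. -/
structure AbelianNetwork (V E A : Type*) (Q : V → Type*) [DecidableEq V] [DecidableEq A] where
  /-- source of an edge -/
  src : E → V
  /-- target of an edge -/
  tgt : E → V
  /-- the vertex whose input alphabet contains the letter `a` -/
  loc : A → V
  /-- the (finitely many) outgoing edges of each vertex -/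
  outEdges : V → Finset E
  mem_outEdges : ∀ (e : E) (v : V), e ∈ outEdges v ↔ src e = v
  /-- single-letter transition function `T_v(a, ·)` of the processor at `v = loc a` -/
  trans : (a : A) → Q (loc a) → Q (loc a)
  /-- message-passing function: the word sent along the edge `e` (with `src e = loc a`)
  when the processor at `loc a` processes the letter `a` in state `q` -/
  msg : (e : E) → (a : A) → Q (loc a) → List A
  /-- letters sent along `e` belong to the alphabet of the target of `e` -/
  msg_tgt : ∀ (e : E) (a : A) (q : Q (loc a)), src e = loc a → ∀ b ∈ msg e a q, loc b = tgt e

namespace AbelianNetwork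

variable {V E A : Type*} {Q : V → Type*} [DecidableEq V] [DecidableEq A]
variable (N : AbelianNetwork V E A Q)

/-- The map `t_a : Q → Q` updating the `loc a` coordinate by `T_{loc a}(a, ·)` and
fixing all other coordinates. -/
def tact (a : A) (q : ∀ v, Q v) : ∀ v, Q v :=
  Function.update q (N.loc a) (N.trans a (q (N.loc a)))

/-- `t_w = t_{w_r} ∘ ⋯ ∘ t_{w_1}` for a word `w = w_1 ⋯ w_r`. -/
def tword (w : List A) (q : ∀ v, Q v) : ∀ v, Q v :=
  w.foldl (fun q a => N.tact a q) q

/-- The word sent along the edge `e` when the letters of `w` are processed in order,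
starting from the global state `q`.  (Extends the message-passing functions to words.) -/
def msgword (e : E) : List A → (∀ v, Q v) → List A
  | [], _ => []
  | a :: w, q =>
      (if N.src e = N.loc a then N.msg e a (q (N.loc a)) else []) ++ msgword e w (N.tact a q)

/-- `N(a, q_{loc a}) ∈ ℕ^A`: the vector counting the letters produced when the processor at
`loc a` processes the letter `a`, summed over the outgoing edges of `loc a`. -/
def Nletter (a : A) (q : ∀ v, Q v) : A → ℕ := fun b =>
  ∑ e ∈ N.outEdges (N.loc a), (N.msg e a (q (N.loc a))).count b

/-- `N(w, q) = ∑_i N(w_i, q^{i-1}_{v(i)})` for a word `w = w_1 ⋯ w_r`. -/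
def Nword : List A → (∀ v, Q v) → A → ℕ
  | [], _ => fun _ => 0
  | a :: w, q => fun b => N.Nletter a q b + Nword w (N.tact a q) b

/-- The network is *abelian*: permuting a word input to a single processor does not change
the resulting state and changes each output word only by permuting its letters. -/
def IsAbelian : Prop :=
  ∀ (v : V) (w w' : List A), (∀ a ∈ w, N.loc a = v) → (∀ a ∈ w', N.loc a = v) →
    (w : Multiset A) = (w' : Multiset A) →
    ∀ q : ∀ u, Q u,
      N.tword w q = N.tword w' q ∧
      ∀ e : E, ((N.msgword e w q : Multiset A) = (N.msgword e w' q : Multiset A))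

/-- The state transition `π_a(x.q) = (x - 1_a + N(a, q_{loc a})).t_a(q)` of the whole
network, viewed as a single automaton with states `x.q ∈ ℤ^A × Q`. -/
def piLetter (a : A) (s : (A → ℤ) × (∀ v, Q v)) : (A → ℤ) × (∀ v, Q v) :=
  (fun b => s.1 b - (if b = a then 1 else 0) + (N.Nletter a s.2 b : ℤ), N.tact a s.2)

/-- `π_w = π_{w_r} ∘ ⋯ ∘ π_{w_1}`. -/
def piWord (w : List A) (s : (A → ℤ) × (∀ v, Q v)) : (A → ℤ) × (∀ v, Q v) :=
  w.foldl (fun s a => N.piLetter a s) s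

/-- The word `w` is a *legal execution* from `x.q`: each letter is a legal move
(`x_a ≥ 1`) from the state obtained by executing the previous letters. -/
def Legal : List A → ((A → ℤ) × (∀ v, Q v)) → Prop
  | [], _ => True
  | a :: w, s => 1 ≤ s.1 a ∧ Legal w (N.piLetter a s)

/-- The word `w` is a *complete execution* from `x.q`: after executing `w`,
no letters remain to be processed. -/
def Complete (w : List A) (s : (A → ℤ) × (∀ v, Q v)) : Prop :=
  ∀ a : A, (N.piWord w s).1 a ≤ 0

/-- A canonical word with letter-count vector `u ∈ ℕ^A`. -/
noncomputable def vecWord [Fintype A] (u : A → ℕ) : List A :=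
  (Finset.univ : Finset A).toList.flatMap fun a => List.replicate (u a) a

/-- `N(u, q)` for a vector `u ∈ ℕ^A`, defined as `N(w, q)` for a word `w` with `|w| = u`. -/
noncomputable def Nvec [Fintype A] (u : A → ℕ) (q : ∀ v, Q v) : A → ℕ := N.Nword (vecWord u) q

/-!
Executing a letter `a` acts on network states by `π_a`, and the abelian property of the
processors makes any two of these maps commute: for letters at distinct vertices they touch
disjoint data, and for letters at a common vertex `v` this is the abelian property applied to
the words `ab` and `ba`. Hence `π_{w'}` depends only on `|w'|`. Now induct on the legal word
`w = a w₂`: the move `a` is legal, so `x_a ≥ 1`, and since a complete execution must bring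
`x_a` down to `≤ 0` while letters other than `a` never decrease it, `a` occurs in `w'`. Moving
that occurrence to the front, `w'` with it erased is complete for `π_a(x.q)`, where `w₂` is
legal, so `w₂` is a subpermutation of it by induction.
-/

lemma tact_apply_ne (a : A) (q : ∀ v, Q v) {v : V} (h : v ≠ N.loc a) :
    N.tact a q v = q v :=
  Function.update_of_ne h _ _

lemma tact_comm_of_loc_ne {a b : A} (hab : N.loc a ≠ N.loc b) (q : ∀ v, Q v) :
    N.tact b (N.tact a q) = N.tact a (N.tact b q) := by
  change Function.update _ _ (N.trans b (N.tact a q (N.loc b)))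
    = Function.update _ _ (N.trans a (N.tact b q (N.loc a)))
  rw [N.tact_apply_ne a q (Ne.symm hab), N.tact_apply_ne b q hab]
  exact Function.update_comm hab _ _ q

lemma Nletter_tact_of_loc_ne {a b : A} (hab : N.loc a ≠ N.loc b) (q : ∀ v, Q v) :
    N.Nletter a (N.tact b q) = N.Nletter a q := by
  unfold Nletter
  rw [N.tact_apply_ne b q hab]

lemma Nword_eq_sum_count_msgword {v : V} {w : List A} (hw : ∀ a ∈ w, N.loc a = v)
    (q : ∀ v, Q v) (c : A) :
    N.Nword w q c = ∑ e ∈ N.outEdges v, (N.msgword e w q).count c := by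
  induction w generalizing q with
  | nil => simp [Nword, msgword]
  | cons a w ih =>
    obtain rfl : N.loc a = v := hw a List.mem_cons_self
    simp only [Nword]
    rw [ih (fun b hb => hw b (List.mem_cons_of_mem a hb)), Nletter, ← Finset.sum_add_distrib]
    refine Finset.sum_congr rfl fun e he => ?_
    simp [msgword, (N.mem_outEdges e _).mp he, List.count_append]

lemma piLetter_comm_of {a b : A} {q : ∀ v, Q v}
    (htact : N.tact b (N.tact a q) = N.tact a (N.tact b q))
    (hNword : N.Nword [a, b] q = N.Nword [b, a] q) (x : A → ℤ) :
    N.piLetter b (N.piLetter a (x, q)) = N.piLetter a (N.piLetter b (x, q)) := by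
  refine Prod.ext (funext fun c => ?_) htact
  have hc : (N.Nletter a q c + N.Nletter b (N.tact a q) c : ℤ)
      = N.Nletter b q c + N.Nletter a (N.tact b q) c := by
    exact_mod_cast congrFun hNword c
  simp only [piLetter]
  linarith

lemma le_piWord_fst_of_notMem {a : A} {u : List A} (ha : a ∉ u) (s : (A → ℤ) × (∀ v, Q v)) :
    s.1 a ≤ (N.piWord u s).1 a := by
  induction u generalizing s with
  | nil => rfl
  | cons c u ih =>
    have hac : a ≠ c := fun h => ha (h ▸ List.mem_cons_self)
    refine le_trans ?_ (ih (fun h => ha (List.mem_cons_of_mem c h)) (N.piLetter c s))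
    simp only [piLetter, if_neg hac]
    linarith [Int.natCast_nonneg (N.Nletter c s.2 a)]

lemma mem_of_complete {a : A} {w' : List A} {s : (A → ℤ) × (∀ v, Q v)} (ha : 1 ≤ s.1 a)
    (hw' : N.Complete w' s) : a ∈ w' := by
  by_contra hnot
  linarith [N.le_piWord_fst_of_notMem hnot s, hw' a]

variable {N}

lemma IsAbelian.Nword_eq (hN : N.IsAbelian) {v : V} {w w' : List A}
    (hw : ∀ a ∈ w, N.loc a = v) (hw' : ∀ a ∈ w', N.loc a = v)
    (hperm : (w : Multiset A) = (w' : Multiset A)) (q : ∀ v, Q v) :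
    N.Nword w q = N.Nword w' q := by
  funext c
  rw [Nword_eq_sum_count_msgword N hw, Nword_eq_sum_count_msgword N hw']
  refine Finset.sum_congr rfl fun e _ => ?_
  simpa using congrArg (Multiset.count c) ((hN v w w' hw hw' hperm q).2 e)

lemma IsAbelian.piLetter_comm (hN : N.IsAbelian) (a b : A) (s : (A → ℤ) × (∀ v, Q v)) :
    N.piLetter b (N.piLetter a s) = N.piLetter a (N.piLetter b s) := by
  obtain ⟨x, q⟩ := s
  by_cases hab : N.loc a = N.loc b
  · have hloc : ∀ c ∈ [a, b], N.loc c = N.loc a := by simp [hab]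
    have hloc' : ∀ c ∈ [b, a], N.loc c = N.loc a := by simp [hab]
    have hperm : (([a, b] : List A) : Multiset A) = [b, a] :=
      Multiset.coe_eq_coe.mpr (List.Perm.swap b a [])
    exact piLetter_comm_of N (hN (N.loc a) _ _ hloc hloc' hperm q).1
      (hN.Nword_eq hloc hloc' hperm q) x
  · refine piLetter_comm_of N (tact_comm_of_loc_ne N hab q) ?_ x
    funext c
    simp [Nword, Nletter_tact_of_loc_ne N hab, Nletter_tact_of_loc_ne N (Ne.symm hab),
      add_comm]

lemma IsAbelian.piWord_eq_of_perm (hN : N.IsAbelian) {u u' : List A} (h : u.Perm u')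
    (s : (A → ℤ) × (∀ v, Q v)) : N.piWord u s = N.piWord u' s :=
  h.foldl_eq' (fun c _ d _ z => hN.piLetter_comm c d z) s

lemma IsAbelian.complete_erase (hN : N.IsAbelian) {a : A} {w' : List A}
    {s : (A → ℤ) × (∀ v, Q v)} (ha : a ∈ w') (hw' : N.Complete w' s) :
    N.Complete (w'.erase a) (N.piLetter a s) := fun b => by
  have hb := hw' b
  rw [hN.piWord_eq_of_perm (List.perm_cons_erase ha)] at hb
  exact hb

lemma IsAbelian.subperm_of_legal_of_complete (hN : N.IsAbelian) {w w' : List A}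
    {s : (A → ℤ) × (∀ v, Q v)} (hw : N.Legal w s) (hw' : N.Complete w' s) : w.Subperm w' := by
  induction w generalizing w' s with
  | nil => exact List.nil_subperm
  | cons a w ih =>
    obtain ⟨ha, hw⟩ := hw
    have hmem : a ∈ w' := mem_of_complete N ha hw'
    have hsub : w.Subperm (w'.erase a) := ih hw (hN.complete_erase hmem hw')
    exact ((List.subperm_cons a).mpr hsub).trans (List.perm_cons_erase hmem).symm.subperm

end AbelianNetwork

/-- **Least Action Principle (Lemma 3.3).** If `w` is a legal execution for `x.q` and `w'`
is a complete execution for `x.q`, then `|w| ≤ |w'|` coordinatewise in `ℕ^A`; in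
particular `r ≤ s` where `r, s` are the lengths of `w, w'`. -/
theorem AbelianNetwork.least_action {V E A : Type*} {Q : V → Type*}
    [DecidableEq V] [DecidableEq A] (N : AbelianNetwork V E A Q) (hN : N.IsAbelian)
    (x : A → ℤ) (q : ∀ v, Q v) (w w' : List A)
    (hw : N.Legal w (x, q)) (hw' : N.Complete w' (x, q)) :
    lc w ≤ lc w' ∧ w.length ≤ w'.length := by
  have hsub : w.Subperm w' := hN.subperm_of_legal_of_complete hw hw'
  exact ⟨hsub.count_le, hsub.length_le⟩
end

section
/- (Characterization of complete executions) Let N be an abelian network with finite total alphabet A. Fix x ∈ ℕ^A and q ∈ Q, and define F : ℕ^A → ℕ^A by F(u) = x + N(u,q), where N(u,q) := N(w,q) for any word w with |w| = u (well-defined by the abelian property). Then a word w ∈ A^* is a complete execution for x.q if and only if F(|w|) ≤ |w|. Moreover F is nondecreasing. -/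
/-!
Executing `w` from `x.q` leaves the message vector `x - |w| + N(w, q)`, so `w` is complete
exactly when `x + N(w, q) ≤ |w|`. Abelianness makes `N(w, q)` depend only on `|w|`: two
adjacent letters at the same processor can be swapped by the abelian property, and letters at
different processors act on disjoint coordinates of the state, so `N(·, q)` is invariant
under permutations of the word. Monotonicity follows because a word with count vector
`u' ≥ u` can be taken to begin with a word of count vector `u`, and `N` is additive along
concatenation with values in `ℕ^A`.
-/

namespace AbelianNetwork

variable {V E A : Type*} {Q : V → Type*} [DecidableEq V] [DecidableEq A]
variable (N : AbelianNetwork V E A Q)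

lemma Nletter_congr (a : A) {q q' : ∀ v, Q v} (h : q (N.loc a) = q' (N.loc a)) :
    N.Nletter a q = N.Nletter a q' := by
  unfold Nletter; rw [h]

lemma Nword_cons (a : A) (w : List A) (q : ∀ v, Q v) (b : A) :
    N.Nword (a :: w) q b = N.Nletter a q b + N.Nword w (N.tact a q) b := rfl

lemma tword_cons (a : A) (w : List A) (q : ∀ v, Q v) :
    N.tword (a :: w) q = N.tword w (N.tact a q) := rfl

lemma tact_comm (hN : N.IsAbelian) (a b : A) (q : ∀ v, Q v) :
    N.tact b (N.tact a q) = N.tact a (N.tact b q) := by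
  by_cases h : N.loc a = N.loc b
  · exact (hN (N.loc a) [a, b] [b, a] (by simp [h]) (by simp [h])
      (Multiset.coe_eq_coe.2 (List.Perm.swap b a [])) q).1
  · unfold tact
    rw [Function.update_of_ne (Ne.symm h), Function.update_of_ne h]
    exact Function.update_comm h _ _ q

lemma Nletter_add_Nletter_tact_comm (hN : N.IsAbelian) (a b : A) (q : ∀ v, Q v) (c : A) :
    N.Nletter a q c + N.Nletter b (N.tact a q) c
      = N.Nletter b q c + N.Nletter a (N.tact b q) c := by
  by_cases h : N.loc a = N.loc b
  · have hmsg := (hN (N.loc a) [a, b] [b, a] (by simp [h]) (by simp [h])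
      (Multiset.coe_eq_coe.2 (List.Perm.swap b a [])) q).2
    have hedge : ∀ e ∈ N.outEdges (N.loc a),
        (N.msg e a (q (N.loc a))).count c + (N.msg e b (N.tact a q (N.loc b))).count c
          = (N.msg e b (q (N.loc b))).count c + (N.msg e a (N.tact b q (N.loc a))).count c := by
      intro e he
      have hsrc : N.src e = N.loc a := (N.mem_outEdges e _).1 he
      simpa [msgword, hsrc, h] using congrArg (Multiset.count c) (hmsg e)
    have hout : N.outEdges (N.loc b) = N.outEdges (N.loc a) := by rw [h]
    unfold Nletter
    rw [hout, ← Finset.sum_add_distrib, ← Finset.sum_add_distrib]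
    exact Finset.sum_congr rfl hedge
  · have hb : N.tact a q (N.loc b) = q (N.loc b) := Function.update_of_ne (Ne.symm h) _ _
    have ha : N.tact b q (N.loc a) = q (N.loc a) := Function.update_of_ne h _ _
    rw [N.Nletter_congr b hb, N.Nletter_congr a ha, add_comm]

lemma Nword_eq_of_perm (hN : N.IsAbelian) {w w' : List A} (h : w.Perm w') (q : ∀ v, Q v) :
    N.Nword w q = N.Nword w' q := by
  induction h generalizing q with
  | nil => rfl
  | cons a _ ih => funext c; rw [Nword_cons, Nword_cons, ih]
  | swap a b l =>
    funext c
    rw [Nword_cons, Nword_cons, Nword_cons, Nword_cons, ← add_assoc, ← add_assoc,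
      N.Nletter_add_Nletter_tact_comm hN b a, N.tact_comm hN a b]
  | trans _ _ ih₁ ih₂ => exact (ih₁ q).trans (ih₂ q)

lemma Nword_append (w₁ w₂ : List A) (q : ∀ v, Q v) (b : A) :
    N.Nword (w₁ ++ w₂) q b = N.Nword w₁ q b + N.Nword w₂ (N.tword w₁ q) b := by
  induction w₁ generalizing q with
  | nil => simp [Nword, tword]
  | cons a w ih => rw [List.cons_append, Nword_cons, ih, Nword_cons, tword_cons, add_assoc]

lemma Nword_le_Nword_append (w₁ w₂ : List A) (q : ∀ v, Q v) :
    N.Nword w₁ q ≤ N.Nword (w₁ ++ w₂) q := fun b => by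
  rw [Nword_append]; exact Nat.le_add_right _ _

lemma piWord_fst (w : List A) (s : (A → ℤ) × (∀ v, Q v)) (b : A) :
    (N.piWord w s).1 b = s.1 b - w.count b + N.Nword w s.2 b := by
  induction w generalizing s with
  | nil => simp [piWord, Nword]
  | cons a w ih =>
    change (N.piWord w (N.piLetter a s)).1 b = _
    rw [ih, Nword_cons, List.count_cons]
    simp only [piLetter, beq_iff_eq]
    push_cast
    by_cases hab : b = a
    · subst hab; simp only [if_true]; ring
    · simp only [hab, Ne.symm hab, if_false]; ring

lemma complete_iff_le_count (w : List A) (s : (A → ℤ) × (∀ v, Q v)) :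
    N.Complete w s ↔ ∀ a, s.1 a + N.Nword w s.2 a ≤ w.count a := by
  simp only [Complete, piWord_fst]
  exact forall_congr' fun a => by omega

section Fintype

variable [Fintype A]

lemma count_vecWord (u : A → ℕ) (a : A) : (vecWord u).count a = u a := by
  simp [vecWord, List.count_flatMap, List.count_replicate, Finset.sum_map_toList]

lemma perm_vecWord_lc (w : List A) : w.Perm (vecWord (lc w)) :=
  List.perm_iff_count.2 fun a => (count_vecWord (lc w) a).symm

lemma Nword_eq_Nvec_lc (hN : N.IsAbelian) (w : List A) (q : ∀ v, Q v) :
    N.Nword w q = N.Nvec (lc w) q :=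
  N.Nword_eq_of_perm hN (perm_vecWord_lc w) q

lemma Nvec_mono (hN : N.IsAbelian) (q : ∀ v, Q v) : Monotone fun u : A → ℕ => N.Nvec u q := by
  intro u u' huu'
  have hcount : lc (vecWord u ++ vecWord (u' - u)) = u' := by
    funext a
    simp only [lc, List.count_append, count_vecWord, Pi.sub_apply]
    have : u a ≤ u' a := huu' a
    omega
  calc N.Nvec u q ≤ N.Nword (vecWord u ++ vecWord (u' - u)) q := N.Nword_le_Nword_append _ _ q
    _ = N.Nvec u' q := by rw [N.Nword_eq_Nvec_lc hN, hcount]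

end Fintype

end AbelianNetwork

/-- **Characterization of complete executions.** Let `N` be an abelian network with finite
total alphabet `A`, fix `x ∈ ℕ^A` and `q ∈ Q`, and define `F : ℕ^A → ℕ^A` by
`F(u) = x + N(u,q)`, where `N(u,q) := N(w,q)` for any word `w` with `|w| = u` (this is
well-defined by the abelian property).  Then a word `w` is a complete execution for `x.q`
if and only if `F(|w|) ≤ |w|`.  Moreover `F` is nondecreasing. -/
theorem AbelianNetwork.complete_iff_feasible {V E A : Type*} {Q : V → Type*}
    [DecidableEq V] [DecidableEq A] [Fintype A]
    (N : AbelianNetwork V E A Q) (hN : N.IsAbelian) (x : A → ℕ) (q : ∀ v, Q v) :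
    (∀ w : List A, N.Nword w q = N.Nvec (lc w) q) ∧
    (∀ w : List A,
      N.Complete w (fun a => (x a : ℤ), q) ↔ (fun a => x a + N.Nvec (lc w) q a) ≤ lc w) ∧
    Monotone (fun u : A → ℕ => fun a => x a + N.Nvec u q a) := by
  refine ⟨fun w => N.Nword_eq_Nvec_lc hN w q, fun w => ?_, ?_⟩
  · rw [N.complete_iff_le_count, ← N.Nword_eq_Nvec_lc hN]
    exact forall_congr' fun a => by simp only [lc]; omega
  · exact fun u u' huu' a => Nat.add_le_add_left (N.Nvec_mono hN q huu' a) _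
end
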